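/- Let ν > 0 and 0 ≤ γ₁ < γ₂ with √γ₂ − √γ₁ ≤ ν and 3γ₁ + γ₂ > ν². Set κ = ν/2 − (γ₂ − γ₁)/(2√(2(γ₁+γ₂) − ν²)), p₁₂ = ν/2 and p₂₂ = (γ₁+γ₂)/2. Then κ ∈ [0, ν/2], P = [[1,p₁₂],[p₁₂,p₂₂]] is symmetric positive definite, and Q_γ P + P Q_γᵀ − 2κ P is positive semi-definite for all γ ∈ [γ₁,γ₂], where Q_γ = [[0,1],[−γ,ν]]. -/

import Mathlib

/-! With `s = √(2(γ₁ + γ₂) - ν²)` one has `ν - 2κ = (γ₂ - γ₁) / s`, and the symmetric matrix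
`Q_γ P + P Q_γᵀ - 2κ P` has upper-left entry `ν - 2κ > 0` and determinant
`(ν - 2κ)² s² / 4 - ((γ₁ + γ₂) / 2 - γ)² = (γ - γ₁) (γ₂ - γ)`, which is nonnegative on `[γ₁, γ₂]`.
The bound `κ ≥ 0`, i.e. `γ₂ - γ₁ ≤ ν s`, comes from `(√γ₂ - √γ₁)² ≤ ν² ≤ (√γ₁ + √γ₂)²`. -/

open Matrix

section FinTwo

variable {R : Type*}

theorem Matrix.isHermitian_symm_fin_two [Star R] [TrivialStar R] (a b c : R) :
    (!![a, b; b, c]).IsHermitian := by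
  rw [isHermitian_iff_isSymm]
  ext i j
  fin_cases i <;> fin_cases j <;> rfl

theorem Matrix.mul_dotProduct_mulVec_symm_fin_two [CommRing R] [StarRing R] [TrivialStar R]
    (a b c : R) (x : Fin 2 → R) :
    a * (star x ⬝ᵥ (!![a, b; b, c] *ᵥ x)) = (a * x 0 + b * x 1) ^ 2 + (a * c - b ^ 2) * x 1 ^ 2 := by
  simp only [star_trivial, dotProduct, mulVec, Fin.sum_univ_two, of_apply, cons_val',
    cons_val_zero, cons_val_one, empty_val', cons_val_fin_one]
  ring

variable [CommRing R] [LinearOrder R] [IsStrictOrderedRing R] [StarRing R] [TrivialStar R]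

theorem Matrix.posSemidef_symm_fin_two {a b c : R} (ha : 0 < a) (h : b ^ 2 ≤ a * c) :
    (!![a, b; b, c]).PosSemidef := by
  refine .of_dotProduct_mulVec_nonneg (isHermitian_symm_fin_two a b c) fun x => ?_
  refine nonneg_of_mul_nonneg_right ?_ ha
  rw [mul_dotProduct_mulVec_symm_fin_two]
  have := sub_nonneg.2 h
  positivity

theorem Matrix.posDef_symm_fin_two {a b c : R} (ha : 0 < a) (h : b ^ 2 < a * c) :
    (!![a, b; b, c]).PosDef := by
  refine .of_dotProduct_mulVec_pos (isHermitian_symm_fin_two a b c) fun x hx => ?_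
  refine pos_of_mul_pos_right ?_ ha.le
  rw [mul_dotProduct_mulVec_symm_fin_two]
  by_cases hx1 : x 1 = 0
  · have hx0 : x 0 ≠ 0 := fun hx0 => hx (by ext i; fin_cases i <;> simp [hx0, hx1])
    rw [hx1, mul_zero, add_zero, zero_pow two_ne_zero, mul_zero, add_zero]
    exact sq_pos_of_ne_zero (mul_ne_zero ha.ne' hx0)
  · have := sub_pos.2 h
    positivity

end FinTwo

theorem companion_mul_add_mul_transpose_sub_smul {R : Type*} [CommRing R] (ν γ p q κ : R) :
    !![0, 1; -γ, ν] * !![1, p; p, q] + !![1, p; p, q] * !![0, 1; -γ, ν]ᵀ - (2 * κ) • !![1, p; p, q]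
      = !![2 * p - 2 * κ, q - γ + ν * p - 2 * κ * p;
           q - γ + ν * p - 2 * κ * p, 2 * (ν * q - γ * p) - 2 * κ * q] := by
  rw [eta_fin_two !![0, 1; -γ, ν]ᵀ]
  ext i j
  fin_cases i <;> fin_cases j <;> simp <;> ring

/-- `ν² (2(γ₁ + γ₂) - ν²) - (γ₂ - γ₁)² = (ν² - (√γ₂ - √γ₁)²) ((√γ₁ + √γ₂)² - ν²)`. -/
theorem sub_le_mul_sqrt_of_sqrt_sub_sqrt_le {ν γ₁ γ₂ : ℝ} (hγ₁ : 0 ≤ γ₁)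
    (hγ : γ₁ ≤ γ₂) (hres : √γ₂ - √γ₁ ≤ ν) (hcone : ν ^ 2 ≤ 3 * γ₁ + γ₂) :
    γ₂ - γ₁ ≤ ν * √(2 * (γ₁ + γ₂) - ν ^ 2) := by
  obtain ⟨a, ha, rfl⟩ : ∃ a, 0 ≤ a ∧ a ^ 2 = γ₁ := ⟨√γ₁, Real.sqrt_nonneg _, Real.sq_sqrt hγ₁⟩
  obtain ⟨b, hb, rfl⟩ : ∃ b, 0 ≤ b ∧ b ^ 2 = γ₂ := ⟨√γ₂, Real.sqrt_nonneg _, Real.sq_sqrt (hγ₁.trans hγ)⟩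
  rw [Real.sqrt_sq ha, Real.sqrt_sq hb] at hres
  have hab : a ≤ b := (pow_le_pow_iff_left₀ ha hb two_ne_zero).1 hγ
  have hν : 0 ≤ ν := (sub_nonneg.2 hab).trans hres
  have hlow : (b - a) ^ 2 ≤ ν ^ 2 := pow_le_pow_left₀ (sub_nonneg.2 hab) hres 2
  have hup : ν ^ 2 ≤ (a + b) ^ 2 := by nlinarith
  have hrad : 0 ≤ 2 * (a ^ 2 + b ^ 2) - ν ^ 2 := by nlinarith
  refine (pow_le_pow_iff_left₀ (by nlinarith) (by positivity) two_ne_zero).1 ?_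
  rw [mul_pow, Real.sq_sqrt hrad]
  nlinarith [mul_nonneg (sub_nonneg.2 hlow) (sub_nonneg.2 hup)]

theorem stmt11_general (ν γ₁ γ₂ : ℝ) (hγ₁ : 0 ≤ γ₁) (hγ : γ₁ < γ₂)
    (hres : Real.sqrt γ₂ - Real.sqrt γ₁ ≤ ν) (hcone : ν ^ 2 < 3 * γ₁ + γ₂) :
    let κ : ℝ := ν / 2 - (γ₂ - γ₁) / (2 * Real.sqrt (2 * (γ₁ + γ₂) - ν ^ 2))
    let p12 : ℝ := ν / 2
    let p22 : ℝ := (γ₁ + γ₂) / 2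
    κ ∈ Set.Icc (0 : ℝ) (ν / 2) ∧
    (!![1, p12; p12, p22] : Matrix (Fin 2) (Fin 2) ℝ).PosDef ∧
    ∀ γ ∈ Set.Icc γ₁ γ₂,
      ((!![0, 1; -γ, ν] : Matrix (Fin 2) (Fin 2) ℝ) * !![1, p12; p12, p22]
        + !![1, p12; p12, p22] * (!![0, 1; -γ, ν] : Matrix (Fin 2) (Fin 2) ℝ)ᵀ
        - (2 * κ) • !![1, p12; p12, p22]).PosSemidef := by
  intro κ p12 p22
  simp only [p12, p22]
  have hkey := sub_le_mul_sqrt_of_sqrt_sub_sqrt_le hγ₁ hγ.le hres hcone.le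
  have hs : 0 < √(2 * (γ₁ + γ₂) - ν ^ 2) := Real.sqrt_pos.2 (by linarith)
  have hgap : (ν - 2 * κ) * √(2 * (γ₁ + γ₂) - ν ^ 2) = γ₂ - γ₁ := by
    simp only [κ]
    field_simp
    ring
  set s := √(2 * (γ₁ + γ₂) - ν ^ 2)
  have hs2 : s ^ 2 = 2 * (γ₁ + γ₂) - ν ^ 2 := Real.sq_sqrt (by linarith)
  have hgap_pos : 0 < ν - 2 * κ := pos_of_mul_pos_left (hgap ▸ sub_pos.2 hγ) hs.le
  have hgap_le : ν - 2 * κ ≤ ν := le_of_mul_le_mul_right (by linarith) hs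
  refine ⟨⟨by linarith, by linarith⟩, posDef_symm_fin_two one_pos (by nlinarith), ?_⟩
  rintro γ ⟨hγl, hγr⟩
  rw [companion_mul_add_mul_transpose_sub_smul]
  refine posSemidef_symm_fin_two (by linarith) ?_
  linear_combination mul_nonneg (sub_nonneg.2 hγl) (sub_nonneg.2 hγr)
    + (ν - 2 * κ) ^ 2 / 4 * hs2 - ((ν - 2 * κ) * s + (γ₂ - γ₁)) / 4 * hgap

/-- explicit admissible matrices in the case `3γ₁ + γ₂ > ν²`. -/
theorem stmt11 (ν γ₁ γ₂ : ℝ) (hν : 0 < ν) (hγ₁ : 0 ≤ γ₁) (hγ : γ₁ < γ₂)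
    (hres : Real.sqrt γ₂ - Real.sqrt γ₁ ≤ ν) (hcone : ν ^ 2 < 3 * γ₁ + γ₂) :
    let κ : ℝ := ν / 2 - (γ₂ - γ₁) / (2 * Real.sqrt (2 * (γ₁ + γ₂) - ν ^ 2))
    let p12 : ℝ := ν / 2
    let p22 : ℝ := (γ₁ + γ₂) / 2
    κ ∈ Set.Icc (0 : ℝ) (ν / 2) ∧
    (!![1, p12; p12, p22] : Matrix (Fin 2) (Fin 2) ℝ).PosDef ∧
    ∀ γ ∈ Set.Icc γ₁ γ₂,
      ((!![0, 1; -γ, ν] : Matrix (Fin 2) (Fin 2) ℝ) * !![1, p12; p12, p22]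
        + !![1, p12; p12, p22] * (!![0, 1; -γ, ν] : Matrix (Fin 2) (Fin 2) ℝ)ᵀ
        - (2 * κ) • !![1, p12; p12, p22]).PosSemidef :=
  stmt11_general ν γ₁ γ₂ hγ₁ hγ hres hcone
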